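/- Let T be an odd integer and n a positive integer with n ≥ T²/4 and n ≡ T (mod 2) (i.e., n odd). Then there exist integers a, b, c, d with a² + b² + c² + d² = n and a + b + c + d = T. -/

import Mathlib

/-!
With `m = 4n - T²` we have `m ≡ 3 (mod 8)`, so by Gauss `m = x² + y² + z²` with `x, y, z` odd.
Changing the sign of `x` if necessary, `T + x + y + z ≡ 0 (mod 4)`, and the four numbers
`(T ± x ± y ± z) / 4` with an even number of minus signs have sum `T` and sum of squares
`(T² + m) / 4 = n`.

The three-square theorem for `m ≡ 3 (mod 8)` is proved along Dirichlet's lines. A prime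
`q ≡ 1 (mod 4)` with `m ∣ 2q + 1` (Dirichlet's theorem on primes in progressions) makes `-m` a
square mod `q`, which produces a positive definite integral ternary form of determinant `1` with
`m` as first diagonal coefficient. Reduction theory shows that every such form is equivalent to
`x² + y² + z²`: a minimal vector can be moved to the first basis vector, and Hermite's bound
`3μ² ≤ 4D` for the minimum `μ` of a positive binary form of determinant `D`, applied to the
binary form left after completing the square, forces the minimum to be `1`.
-/

open Matrix

def IsPrimitiveVector {n : Type*} (v : n → ℤ) : Prop := ∀ k : ℤ, (∀ i, k ∣ v i) → IsUnit k

lemma IsPrimitiveVector.gcd_eq_one {v : Fin 2 → ℤ} (hv : IsPrimitiveVector v) :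
    Int.gcd (v 0) (v 1) = 1 := by
  have h := hv (Int.gcd (v 0) (v 1)) (by
    intro i; fin_cases i
    exacts [Int.gcd_dvd_left _ _, Int.gcd_dvd_right _ _])
  exact_mod_cast Int.isUnit_iff_natAbs_eq.mp h

lemma exists_det_eq_one_mulVec_single_fin_two {v : Fin 2 → ℤ} (hv : IsPrimitiveVector v) :
    ∃ U : Matrix (Fin 2) (Fin 2) ℤ, U.det = 1 ∧ U *ᵥ Pi.single 0 1 = v := by
  have hbez := Int.gcd_eq_gcd_ab (v 0) (v 1)
  rw [hv.gcd_eq_one] at hbez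
  refine ⟨!![v 0, -Int.gcdB (v 0) (v 1); v 1, Int.gcdA (v 0) (v 1)], ?_, ?_⟩
  · rw [det_fin_two_of]; linear_combination -hbez
  · ext i; fin_cases i <;> simp

lemma IsPrimitiveVector.gcd_gcd_eq_one {v : Fin 3 → ℤ} (hv : IsPrimitiveVector v) :
    Int.gcd (v 0) (Int.gcd (v 1) (v 2)) = 1 := by
  have h := hv (Int.gcd (v 0) (Int.gcd (v 1) (v 2))) (by
    intro i; fin_cases i
    exacts [Int.gcd_dvd_left _ _, (Int.gcd_dvd_right _ _).trans (Int.gcd_dvd_left _ _),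
      (Int.gcd_dvd_right _ _).trans (Int.gcd_dvd_right _ _)])
  exact_mod_cast Int.isUnit_iff_natAbs_eq.mp h

lemma exists_det_eq_one_mulVec_single_fin_three {v : Fin 3 → ℤ} (hv : IsPrimitiveVector v) :
    ∃ U : Matrix (Fin 3) (Fin 3) ℤ, U.det = 1 ∧ U *ᵥ Pi.single 0 1 = v := by
  set g : ℤ := ((Int.gcd (v 1) (v 2) : ℕ) : ℤ)
  have hbez₁ : v 1 * Int.gcdA (v 1) (v 2) + v 2 * Int.gcdB (v 1) (v 2) = g :=
    (Int.gcd_eq_gcd_ab _ _).symm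
  have hbez₀ := Int.gcd_eq_gcd_ab (v 0) g
  rw [hv.gcd_gcd_eq_one] at hbez₀
  by_cases hg : g = 0
  · obtain ⟨h1, h2⟩ := Int.gcd_eq_zero_iff.mp (Int.natCast_eq_zero.mp hg)
    have h0 : (v 0).natAbs = 1 := by simpa [h1, h2] using hv.gcd_gcd_eq_one
    refine ⟨!![v 0, 0, 0; 0, v 0, 0; 0, 0, 1], ?_, ?_⟩
    · simp [det_fin_three, ← sq, ← Int.natAbs_sq, h0]
    · ext i; fin_cases i <;> simp [h1, h2]
  · obtain ⟨y, hy⟩ := Int.gcd_dvd_left (v 1) (v 2)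
    obtain ⟨z, hz⟩ := Int.gcd_dvd_right (v 1) (v 2)
    refine ⟨!![v 0, -Int.gcdB (v 0) g, 0;
      v 1, Int.gcdA (v 0) g * y, -Int.gcdB (v 1) (v 2);
      v 2, Int.gcdA (v 0) g * z, Int.gcdA (v 1) (v 2)], ?_, ?_⟩
    · have hyz : y * Int.gcdA (v 1) (v 2) + z * Int.gcdB (v 1) (v 2) = 1 := by
        apply mul_left_cancel₀ hg
        linear_combination hbez₁ - Int.gcdA (v 1) (v 2) * hy - Int.gcdB (v 1) (v 2) * hz
      simp only [det_fin_three, of_apply, cons_val', cons_val_zero, cons_val_fin_one, cons_val_one,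
        cons_val, mul_neg, neg_mul, sub_neg_eq_add, neg_neg, zero_mul, add_zero, sub_zero]
      linear_combination (v 0 * Int.gcdA (v 0) g) * hyz + Int.gcdB (v 0) g * hbez₁ - hbez₀
    · ext i; fin_cases i <;> simp

lemma exists_abs_two_mul_add_le (b : ℤ) {m : ℤ} (hm : 0 < m) :
    ∃ k : ℤ, |2 * (m * k + b)| ≤ m := by
  have hdiv := Int.emod_add_mul_ediv b m
  have h0 := Int.emod_nonneg b hm.ne'
  have hlt := Int.emod_lt_of_pos b hm
  by_cases h : 2 * (b % m) ≤ m
  · exact ⟨-(b / m), abs_le.mpr ⟨by linarith, by linarith⟩⟩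
  · exact ⟨-(b / m) - 1, abs_le.mpr ⟨by linarith, by linarith⟩⟩

namespace Matrix

section

variable {n : Type*} [Fintype n]

lemma dotProduct_transpose_mul_mul_mulVec (M U : Matrix n n ℤ) (v : n → ℤ) :
    v ⬝ᵥ (Uᵀ * M * U) *ᵥ v = U *ᵥ v ⬝ᵥ M *ᵥ (U *ᵥ v) := by
  rw [← mulVec_mulVec, ← mulVec_mulVec, dotProduct_mulVec, vecMul_transpose]

lemma dotProduct_transpose_mul_self_mulVec (P : Matrix n n ℤ) (v : n → ℤ) :
    v ⬝ᵥ (Pᵀ * P) *ᵥ v = ∑ i, (P *ᵥ v) i ^ 2 := by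
  rw [← mulVec_mulVec, dotProduct_mulVec, vecMul_transpose]
  simp only [dotProduct, sq]

lemma PosDef.isPrimitiveVector_of_forall_le {M : Matrix n n ℤ} (hM : M.PosDef) {v : n → ℤ}
    (hv : v ≠ 0) (hmin : ∀ w ≠ 0, v ⬝ᵥ M *ᵥ v ≤ w ⬝ᵥ M *ᵥ w) : IsPrimitiveVector v := by
  intro k hk
  choose w hw using hk
  have hvw : v = k • w := funext hw
  have hw0 : w ≠ 0 := by rintro rfl; simp_all
  have hpos : 0 < w ⬝ᵥ M *ᵥ w := by simpa using hM.dotProduct_mulVec_pos hw0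
  have hle := hmin w hw0
  rw [hvw, mulVec_smul, smul_dotProduct, dotProduct_smul, smul_eq_mul, smul_eq_mul] at hle
  have hk0 : k ≠ 0 := by rintro rfl; simp_all
  have hkk : k * k ≤ 1 := le_of_mul_le_mul_right (by linarith) hpos
  have : -1 ≤ k ∧ k ≤ 1 := ⟨by nlinarith, by nlinarith⟩
  rw [Int.isUnit_iff]
  omega

variable [DecidableEq n]

lemma single_dotProduct_mulVec_single (M : Matrix n n ℤ) (i : n) :
    Pi.single i 1 ⬝ᵥ M *ᵥ Pi.single i 1 = M i i := by
  simp

lemma mulVec_injective_of_det_eq_one {U : Matrix n n ℤ} (hU : U.det = 1) :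
    Function.Injective U.mulVec :=
  mulVec_injective_of_isUnit ((isUnit_iff_isUnit_det U).mpr (by simp [hU]))

lemma PosDef.transpose_mul_mul {M U : Matrix n n ℤ} (hM : M.PosDef) (hU : U.det = 1) :
    (Uᵀ * M * U).PosDef := by
  simpa [conjTranspose_eq_transpose_of_trivial] using
    hM.conjTranspose_mul_mul_same (mulVec_injective_of_det_eq_one hU)

lemma det_transpose_mul_mul {M U : Matrix n n ℤ} (hU : U.det = 1) :
    (Uᵀ * M * U).det = M.det := by
  simp [det_mul, hU]

lemma exists_eq_transpose_mul_self_of_transpose_mul_mul {M U : Matrix n n ℤ} (hU : U.det = 1)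
    (h : ∃ P : Matrix n n ℤ, Uᵀ * M * U = Pᵀ * P) : ∃ P : Matrix n n ℤ, M = Pᵀ * P := by
  obtain ⟨P, hP⟩ := h
  have hUu : IsUnit U.det := by simp [hU]
  have hUt : IsUnit Uᵀ.det := by simpa using hUu
  refine ⟨P * U⁻¹, ?_⟩
  calc M = (Uᵀ⁻¹ * Uᵀ) * M * (U * U⁻¹) := by
        rw [nonsing_inv_mul _ hUt, mul_nonsing_inv _ hUu, Matrix.one_mul, Matrix.mul_one]
    _ = (P * U⁻¹)ᵀ * (P * U⁻¹) := by
        simp only [transpose_mul, transpose_nonsing_inv, Matrix.mul_assoc]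
        rw [← Matrix.mul_assoc Pᵀ, ← hP]
        simp only [Matrix.mul_assoc]

lemma PosDef.exists_forall_le [Nonempty n] {M : Matrix n n ℤ} (hM : M.PosDef) :
    ∃ v ≠ 0, ∀ w ≠ 0, v ⬝ᵥ M *ᵥ v ≤ w ⬝ᵥ M *ᵥ w := by
  obtain ⟨i⟩ := ‹Nonempty n›
  obtain ⟨_, ⟨v, hv, rfl⟩, hmin⟩ :=
    Int.exists_least_of_bdd (P := fun z => ∃ v ≠ 0, v ⬝ᵥ M *ᵥ v = z)
      ⟨0, fun _ ⟨v, hv, hz⟩ => hz ▸ (by simpa using (hM.dotProduct_mulVec_pos hv).le)⟩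
      ⟨_, Pi.single i 1, by simp, rfl⟩
  exact ⟨v, hv, fun w hw => hmin _ ⟨w, hw, rfl⟩⟩

lemma PosDef.exists_transpose_mul_mul_apply_le {M : Matrix n n ℤ} (hM : M.PosDef) (i : n)
    (hcompl : ∀ v : n → ℤ, IsPrimitiveVector v →
      ∃ U : Matrix n n ℤ, U.det = 1 ∧ U *ᵥ Pi.single i 1 = v) :
    ∃ U : Matrix n n ℤ, U.det = 1 ∧ ∀ w ≠ 0, (Uᵀ * M * U) i i ≤ w ⬝ᵥ (Uᵀ * M * U) *ᵥ w := by
  have : Nonempty n := ⟨i⟩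
  obtain ⟨v, hv, hmin⟩ := hM.exists_forall_le
  obtain ⟨U, hU, hUv⟩ := hcompl v (hM.isPrimitiveVector_of_forall_le hv hmin)
  refine ⟨U, hU, fun w hw => ?_⟩
  rw [← single_dotProduct_mulVec_single (Uᵀ * M * U) i, dotProduct_transpose_mul_mul_mulVec,
    dotProduct_transpose_mul_mul_mulVec, hUv]
  exact hmin _ fun h => hw (mulVec_injective_of_det_eq_one hU (by rw [h, mulVec_zero]))

end

lemma mul_dotProduct_mulVec_fin_two {M : Matrix (Fin 2) (Fin 2) ℤ} (hM : M.IsSymm)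
    (v : Fin 2 → ℤ) :
    M 0 0 * (v ⬝ᵥ M *ᵥ v) = (M 0 0 * v 0 + M 0 1 * v 1) ^ 2 + M.det * v 1 ^ 2 := by
  simp only [dotProduct, mulVec, Fin.sum_univ_two, det_fin_two, hM.apply 0 1]
  ring

lemma posDef_fin_two {M : Matrix (Fin 2) (Fin 2) ℤ} (hM : M.IsSymm) (h0 : 0 < M 0 0)
    (hdet : 0 < M.det) : M.PosDef := by
  refine PosDef.of_dotProduct_mulVec_pos (isHermitian_iff_isSymm.mpr hM) fun v hv => ?_
  have h := mul_dotProduct_mulVec_fin_two hM v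
  simp only [star_trivial]
  by_cases h1 : v 1 = 0
  · have h0' : v 0 ≠ 0 := fun h0' => hv (by ext i; fin_cases i <;> assumption)
    rw [h1] at h
    have : 0 < (M 0 0 * v 0) ^ 2 := by positivity
    nlinarith
  · have : 0 < M.det * v 1 ^ 2 := by positivity
    nlinarith [sq_nonneg (M 0 0 * v 0 + M 0 1 * v 1)]

lemma three_mul_sq_le_four_mul_det {M : Matrix (Fin 2) (Fin 2) ℤ} (hM : M.IsSymm)
    (h0 : 0 < M 0 0) (hmin : ∀ v ≠ 0, M 0 0 ≤ v ⬝ᵥ M *ᵥ v) : 3 * M 0 0 ^ 2 ≤ 4 * M.det := by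
  obtain ⟨k, hk⟩ := exists_abs_two_mul_add_le (M 0 1) h0
  have h := mul_dotProduct_mulVec_fin_two hM ![k, 1]
  have hle := hmin ![k, 1] (fun h => by simpa using congrFun h 1)
  simp only [Matrix.cons_val_zero, Matrix.cons_val_one, one_pow, mul_one] at h
  have hsq : (2 * (M 0 0 * k + M 0 1)) ^ 2 ≤ M 0 0 ^ 2 :=
    sq_le_sq' (abs_le.mp hk).1 (abs_le.mp hk).2
  nlinarith

lemma PosDef.exists_three_mul_sq_le_four_mul_det {M : Matrix (Fin 2) (Fin 2) ℤ} (hM : M.PosDef) :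
    ∃ v ≠ 0, 3 * (v ⬝ᵥ M *ᵥ v) ^ 2 ≤ 4 * M.det := by
  obtain ⟨U, hU, hmin⟩ :=
    hM.exists_transpose_mul_mul_apply_le 0 fun _ => exists_det_eq_one_mulVec_single_fin_two
  have hN := hM.transpose_mul_mul hU
  have hv : U *ᵥ Pi.single 0 1 ≠ 0 := fun h => by
    simpa using mulVec_injective_of_det_eq_one hU (h.trans (mulVec_zero U).symm)
  refine ⟨U *ᵥ Pi.single 0 1, hv, ?_⟩
  rw [← dotProduct_transpose_mul_mul_mulVec, single_dotProduct_mulVec_single,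
    ← det_transpose_mul_mul (M := M) hU]
  exact three_mul_sq_le_four_mul_det (isHermitian_iff_isSymm.mp hN.1) hN.diag_pos hmin

lemma PosDef.exists_eq_transpose_mul_self_fin_two {M : Matrix (Fin 2) (Fin 2) ℤ} (hM : M.PosDef)
    (hdet : M.det = 1) : ∃ P : Matrix (Fin 2) (Fin 2) ℤ, M = Pᵀ * P := by
  obtain ⟨U, hU, hmin⟩ :=
    hM.exists_transpose_mul_mul_apply_le 0 fun _ => exists_det_eq_one_mulVec_single_fin_two
  refine exists_eq_transpose_mul_self_of_transpose_mul_mul hU ?_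
  set N := Uᵀ * M * U
  have hN : N.PosDef := hM.transpose_mul_mul hU
  have hNs : N.IsSymm := isHermitian_iff_isSymm.mp hN.1
  have hNdet : N.det = 1 := (det_transpose_mul_mul hU).trans hdet
  have h3 := three_mul_sq_le_four_mul_det hNs hN.diag_pos hmin
  have h1 : N 0 0 = 1 := by nlinarith [hN.diag_pos (i := 0)]
  refine ⟨!![1, N 0 1; 0, 1], ?_⟩
  rw [det_fin_two, h1, hNs.apply 0 1] at hNdet
  ext i j
  fin_cases i <;> fin_cases j <;> simp [mul_apply, hNs.apply 0 1, h1]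
  linarith

section

/-- `M 0 0` times the Schur complement of the entry `M 0 0`, which keeps it integral. -/
def schurCompl (M : Matrix (Fin 3) (Fin 3) ℤ) : Matrix (Fin 2) (Fin 2) ℤ :=
  of fun i j => M 0 0 * M i.succ j.succ - M 0 i.succ * M 0 j.succ

variable {M : Matrix (Fin 3) (Fin 3) ℤ}

lemma IsSymm.schurCompl (hM : M.IsSymm) : M.schurCompl.IsSymm := by
  ext i j
  simp only [Matrix.schurCompl, transpose_apply, of_apply, hM.apply i.succ j.succ]
  ring

lemma det_schurCompl (hM : M.IsSymm) : M.schurCompl.det = M 0 0 * M.det := by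
  rw [det_fin_two, det_fin_three]
  simp only [Matrix.schurCompl, of_apply, Fin.succ_zero_eq_one, Fin.succ_one_eq_two, hM.apply 0 1,
    hM.apply 0 2, hM.apply 1 2]
  ring

lemma mul_dotProduct_mulVec_fin_three (hM : M.IsSymm) (v : Fin 3 → ℤ) :
    M 0 0 * (v ⬝ᵥ M *ᵥ v) =
      (M 0 0 * v 0 + M 0 1 * v 1 + M 0 2 * v 2) ^ 2 +
        Fin.tail v ⬝ᵥ M.schurCompl *ᵥ Fin.tail v := by
  simp only [dotProduct, mulVec, Fin.sum_univ_two, Fin.sum_univ_three, Fin.tail, schurCompl,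
    of_apply, Fin.succ_zero_eq_one, Fin.succ_one_eq_two, hM.apply 0 1, hM.apply 0 2, hM.apply 1 2]
  ring

lemma PosDef.schurCompl (hM : M.PosDef) : M.schurCompl.PosDef := by
  have hs : M.IsSymm := isHermitian_iff_isSymm.mp hM.1
  refine PosDef.of_dotProduct_mulVec_pos (isHermitian_iff_isSymm.mpr hs.schurCompl)
    fun w hw => ?_
  simp only [star_trivial]
  have h0 : 0 < M 0 0 := hM.diag_pos
  set v : Fin 3 → ℤ := ![-(M 0 1 * w 0 + M 0 2 * w 1), M 0 0 * w 0, M 0 0 * w 1]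
  have htail : Fin.tail v = M 0 0 • w := by ext i; fin_cases i <;> rfl
  have hv : v ≠ 0 := fun h => hw <| smul_right_injective _ h0.ne' <| by
    simp only [← htail, h, smul_zero]; rfl
  have h := mul_dotProduct_mulVec_fin_three hs v
  rw [htail, mulVec_smul, dotProduct_smul, smul_dotProduct, smul_eq_mul, smul_eq_mul] at h
  have hsq : M 0 0 * v 0 + M 0 1 * v 1 + M 0 2 * v 2 = 0 := by
    simp only [v, cons_val_zero, cons_val_one, cons_val]
    ring
  rw [hsq, zero_pow two_ne_zero, zero_add] at h
  have hpos : 0 < v ⬝ᵥ M *ᵥ v := by simpa using hM.dotProduct_mulVec_pos hv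
  have : v ⬝ᵥ M *ᵥ v = M 0 0 * (w ⬝ᵥ M.schurCompl *ᵥ w) := mul_left_cancel₀ h0.ne' h
  rw [this] at hpos
  exact pos_of_mul_pos_right hpos h0.le

lemma posDef_of_posDef_schurCompl (hM : M.IsSymm) (h0 : 0 < M 0 0) (hG : M.schurCompl.PosDef) :
    M.PosDef := by
  refine PosDef.of_dotProduct_mulVec_pos (isHermitian_iff_isSymm.mpr hM) fun v hv => ?_
  simp only [star_trivial]
  have h := mul_dotProduct_mulVec_fin_three hM v
  by_cases ht : Fin.tail v = 0
  · have h1 : v 1 = 0 := congrFun ht 0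
    have h2 : v 2 = 0 := congrFun ht 1
    have hv0 : v 0 ≠ 0 := fun h0' => hv (by ext i; fin_cases i <;> assumption)
    rw [ht, h1, h2] at h
    simp only [mul_zero, add_zero, zero_dotProduct] at h
    have : 0 < (M 0 0 * v 0) ^ 2 := by positivity
    nlinarith
  · have := hG.dotProduct_mulVec_pos ht
    simp only [star_trivial] at this
    nlinarith [sq_nonneg (M 0 0 * v 0 + M 0 1 * v 1 + M 0 2 * v 2)]

lemma three_mul_sq_le_four_mul_dotProduct_schurCompl (hM : M.IsSymm) (h0 : 0 < M 0 0)
    (hmin : ∀ v ≠ 0, M 0 0 ≤ v ⬝ᵥ M *ᵥ v) {w : Fin 2 → ℤ} (hw : w ≠ 0) :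
    3 * M 0 0 ^ 2 ≤ 4 * (w ⬝ᵥ M.schurCompl *ᵥ w) := by
  obtain ⟨k, hk⟩ := exists_abs_two_mul_add_le (M 0 1 * w 0 + M 0 2 * w 1) h0
  have htail : Fin.tail ![k, w 0, w 1] = w := by ext i; fin_cases i <;> rfl
  have hv : ![k, w 0, w 1] ≠ 0 := fun h => hw (by rw [← htail, h]; rfl)
  have h := mul_dotProduct_mulVec_fin_three hM ![k, w 0, w 1]
  rw [htail] at h
  have hle := mul_le_mul_of_nonneg_left (hmin _ hv) h0.le
  have hsq : (2 * (M 0 0 * k + (M 0 1 * w 0 + M 0 2 * w 1))) ^ 2 ≤ M 0 0 ^ 2 :=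
    sq_le_sq' (abs_le.mp hk).1 (abs_le.mp hk).2
  simp only [cons_val_zero, cons_val_one, cons_val_two, Nat.succ_eq_add_one, Nat.reduceAdd,
    tail_cons, head_cons] at h
  nlinarith

lemma PosDef.apply_zero_zero_eq_one (hM : M.PosDef) (hdet : M.det = 1)
    (hmin : ∀ v ≠ 0, M 0 0 ≤ v ⬝ᵥ M *ᵥ v) : M 0 0 = 1 := by
  have hs : M.IsSymm := isHermitian_iff_isSymm.mp hM.1
  have h0 : 0 < M 0 0 := hM.diag_pos
  obtain ⟨w, hw, hHermite⟩ := hM.schurCompl.exists_three_mul_sq_le_four_mul_det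
  rw [det_schurCompl hs, hdet, mul_one] at hHermite
  have hround := three_mul_sq_le_four_mul_dotProduct_schurCompl hs h0 hmin hw
  set m := M 0 0
  set q := w ⬝ᵥ M.schurCompl *ᵥ w
  -- `3m² ≤ 4q` and `3q² ≤ 4m` give `27m⁴ ≤ 64m`.
  have h27 : 27 * m ^ 4 ≤ 64 * m := by nlinarith
  by_contra hne
  have h8 : 2 ^ 3 ≤ m ^ 3 := pow_le_pow_left₀ (by norm_num) (by omega) 3
  nlinarith

lemma exists_eq_transpose_mul_self_of_apply_zero_zero_eq_one (hM : M.IsSymm) (h1 : M 0 0 = 1)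
    {P : Matrix (Fin 2) (Fin 2) ℤ} (hP : M.schurCompl = Pᵀ * P) :
    M = !![1, M 0 1, M 0 2; 0, P 0 0, P 0 1; 0, P 1 0, P 1 1]ᵀ *
      !![1, M 0 1, M 0 2; 0, P 0 0, P 0 1; 0, P 1 0, P 1 1] := by
  have hP' (i j : Fin 2) : M i.succ j.succ = M 0 i.succ * M 0 j.succ + (Pᵀ * P) i j := by
    have := congrFun (congrFun hP i) j
    simp only [schurCompl, of_apply, h1, one_mul] at this
    linarith
  have h11 := hP' 0 0
  have h12 := hP' 0 1
  have h22 := hP' 1 1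
  simp only [Fin.succ_zero_eq_one, Fin.succ_one_eq_two, mul_apply, transpose_apply,
    Fin.sum_univ_two] at h11 h12 h22
  ext i j
  fin_cases i <;> fin_cases j <;>
    simp [mul_apply, Fin.sum_univ_three, h1, hM.apply 0 1, hM.apply 0 2, hM.apply 1 2] <;> linarith

lemma PosDef.exists_eq_transpose_mul_self_fin_three (hM : M.PosDef) (hdet : M.det = 1) :
    ∃ P : Matrix (Fin 3) (Fin 3) ℤ, M = Pᵀ * P := by
  obtain ⟨U, hU, hmin⟩ :=
    hM.exists_transpose_mul_mul_apply_le 0 fun _ => exists_det_eq_one_mulVec_single_fin_three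
  refine exists_eq_transpose_mul_self_of_transpose_mul_mul hU ?_
  set N := Uᵀ * M * U
  have hN : N.PosDef := hM.transpose_mul_mul hU
  have hNs : N.IsSymm := isHermitian_iff_isSymm.mp hN.1
  have hNdet : N.det = 1 := (det_transpose_mul_mul hU).trans hdet
  have h1 : N 0 0 = 1 := hN.apply_zero_zero_eq_one hNdet hmin
  obtain ⟨P, hP⟩ := hN.schurCompl.exists_eq_transpose_mul_self_fin_two
    (by rw [det_schurCompl hNs, h1, hNdet, mul_one])
  exact ⟨_, exists_eq_transpose_mul_self_of_apply_zero_zero_eq_one hNs h1 hP⟩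

end

end Matrix

lemma exists_prime_mod_four_eq_one_dvd_two_mul_add_one {m : ℕ} (hm : m % 8 = 3) :
    ∃ q : ℕ, q.Prime ∧ q % 4 = 1 ∧ m ∣ 2 * q + 1 := by
  -- `q ≡ (m - 1) / 2 (mod 4m)` gives both `q ≡ 1 (mod 4)` and `m ∣ 2q + 1`.
  set r := m / 2
  have hmr : m = 2 * r + 1 := by omega
  have hr4 : Nat.Coprime r 4 := by
    simpa using (Nat.coprime_two_right.mpr (Nat.odd_iff.mpr (by omega))).pow_right 2
  have hrm : Nat.Coprime r m := by
    rw [hmr]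
    exact (Nat.coprime_mul_right_add_right r 1 2).mpr (Nat.coprime_one_right r)
  have hcop : Nat.Coprime r (4 * m) := hr4.mul_right hrm
  have : NeZero (4 * m) := ⟨by omega⟩
  obtain ⟨q, -, hq, hqr⟩ :=
    Nat.forall_exists_prime_gt_and_eq_mod ((ZMod.isUnit_iff_coprime r (4 * m)).mpr hcop) 0
  have hmod : q ≡ r [MOD 4 * m] := (ZMod.natCast_eq_natCast_iff _ _ _).mp hqr
  refine ⟨q, hq, ?_, ?_⟩
  · have := hmod.of_mul_right m
    unfold Nat.ModEq at this
    omega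
  · have := ((hmod.of_mul_left 4).mul_left 2).add_right 1
    rw [← hmr] at this
    exact Nat.modEq_zero_iff_dvd.mp (this.trans (Nat.modEq_zero_iff_dvd.mpr dvd_rfl))

lemma jacobiSym_neg_eq_one {m q : ℕ} (hm : m % 8 = 3) (hq : q % 4 = 1) (hdvd : m ∣ 2 * q + 1) :
    jacobiSym (-m) q = 1 := by
  have hmodd : Odd m := Nat.odd_iff.mpr (by omega)
  have hqodd : Odd q := Nat.odd_iff.mpr (by omega)
  have h2q : jacobiSym (2 * q) m = jacobiSym (-1) m := by
    refine jacobiSym.mod_left' (Int.emod_eq_emod_iff_emod_sub_eq_zero.mpr ?_)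
    rw [sub_neg_eq_add]
    exact Int.emod_eq_zero_of_dvd (by exact_mod_cast hdvd)
  rw [jacobiSym.mul_left, jacobiSym.at_two hmodd, jacobiSym.at_neg_one hmodd,
    ZMod.χ₈_nat_eq_if_mod_eight, ZMod.χ₄_nat_three_mod_four (by omega)] at h2q
  rw [jacobiSym.neg _ hqodd, ZMod.χ₄_nat_one_mod_four hq, one_mul,
    ← jacobiSym.quadratic_reciprocity_one_mod_four hq hmodd]
  simp only [show m % 2 ≠ 0 by omega, show ¬(m % 8 = 1 ∨ m % 8 = 7) by omega, if_false] at h2q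
  linarith

lemma exists_dvd_mul_sq_add_one {m q : ℕ} [Fact q.Prime] (hqm : ¬ q ∣ m)
    (hJ : jacobiSym (-m) q = 1) : ∃ b : ℤ, (q : ℤ) ∣ m * b ^ 2 + 1 := by
  have hm0 : (m : ZMod q) ≠ 0 := by rwa [Ne, ZMod.natCast_eq_zero_iff]
  obtain ⟨y, hy⟩ : IsSquare ((-m : ℤ) : ZMod q) := by
    rw [← legendreSym.eq_one_iff q (by simpa using hm0), jacobiSym.legendreSym.to_jacobiSym]
    exact hJ
  refine ⟨(y * (m : ZMod q)⁻¹).val, ?_⟩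
  rw [← ZMod.intCast_zmod_eq_zero_iff_dvd]
  push_cast at hy ⊢
  rw [ZMod.natCast_zmod_val]
  linear_combination (y ^ 2 * (m : ZMod q)⁻¹ - 1) * mul_inv_cancel₀ hm0 - (m : ZMod q)⁻¹ * hy

lemma exists_two_mul_dvd_mul_sq_add_one {m q : ℕ} [Fact q.Prime] (hm : Odd m) (hq : Odd q)
    (hqm : ¬ q ∣ m) (hJ : jacobiSym (-m) q = 1) : ∃ b : ℤ, 2 * (q : ℤ) ∣ m * b ^ 2 + 1 := by
  obtain ⟨b, hb⟩ := exists_dvd_mul_sq_add_one hqm hJ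
  obtain ⟨b, hbodd, hqb⟩ : ∃ b' : ℤ, Odd b' ∧ (q : ℤ) ∣ m * b' ^ 2 + 1 := by
    rcases Int.even_or_odd b with heven | hodd
    · refine ⟨b + q, heven.add_odd (by exact_mod_cast hq), ?_⟩
      have : (m : ℤ) * (b + q) ^ 2 + 1 = (m * b ^ 2 + 1) + q * (m * (2 * b + q)) := by ring
      rw [this]
      exact dvd_add hb (dvd_mul_right _ _)
    · exact ⟨b, hodd, hb⟩
  have h2 : (2 : ℤ) ∣ m * b ^ 2 + 1 :=
    (((by exact_mod_cast hm : Odd (m : ℤ)).mul hbodd.pow).add_one).two_dvd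
  have hcop : IsCoprime (2 : ℤ) q := by
    exact_mod_cast Nat.isCoprime_iff_coprime.mpr (Nat.coprime_two_left.mpr hq)
  exact ⟨b, hcop.mul_dvd h2 hqb⟩

lemma exists_posDef_det_eq_one_apply_zero_zero_eq {m : ℕ} (hm : m % 8 = 3) :
    ∃ M : Matrix (Fin 3) (Fin 3) ℤ, M.PosDef ∧ M.det = 1 ∧ M 0 0 = m := by
  obtain ⟨q, hq, hq4, hdvd⟩ := exists_prime_mod_four_eq_one_dvd_two_mul_add_one hm
  have : Fact q.Prime := ⟨hq⟩
  have hqm : ¬ q ∣ m := fun h => hq.one_lt.ne'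
    (Nat.dvd_one.mp ((Nat.dvd_add_right (dvd_mul_left q 2)).mp (h.trans hdvd)))
  obtain ⟨b, C, hC⟩ := exists_two_mul_dvd_mul_sq_add_one (Nat.odd_iff.mpr (by omega))
    (Nat.odd_iff.mpr (by omega)) hqm (jacobiSym_neg_eq_one hm hq4 hdvd)
  obtain ⟨A, hA⟩ : (m : ℤ) ∣ 2 * q + 1 := by exact_mod_cast hdvd
  -- `det M = C (mA - 1) - mb² = 2qC - mb² = 1`.
  set M : Matrix (Fin 3) (Fin 3) ℤ := !![(m : ℤ), 1, 0; 1, A, b; 0, b, C]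
  have hs : M.IsSymm := by ext i j; fin_cases i <;> fin_cases j <;> rfl
  have hdet : M.det = 1 := by
    simp only [M, det_fin_three, of_apply, cons_val', cons_val_zero, cons_val_fin_one, cons_val_one,
      cons_val, mul_one, one_mul, mul_zero, add_zero, zero_mul, sub_zero]
    linear_combination C * hA.symm - hC
  have hm0 : (0 : ℤ) < m := by omega
  have hG : M.schurCompl.PosDef := by
    refine posDef_fin_two hs.schurCompl ?_ (by rw [det_schurCompl hs, hdet, mul_one]; exact hm0)
    have hq0 : (0 : ℤ) < q := by exact_mod_cast hq.pos
    change 0 < (m : ℤ) * A - 1 * 1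
    linarith
  exact ⟨M, posDef_of_posDef_schurCompl hs hm0 hG, hdet, rfl⟩

lemma exists_sq_add_sq_add_sq_eq_of_mod_eight_eq_three {m : ℕ} (hm : m % 8 = 3) :
    ∃ x y z : ℤ, x ^ 2 + y ^ 2 + z ^ 2 = m := by
  obtain ⟨M, hM, hdet, hm⟩ := exists_posDef_det_eq_one_apply_zero_zero_eq hm
  obtain ⟨P, hP⟩ := hM.exists_eq_transpose_mul_self_fin_three hdet
  have h := dotProduct_transpose_mul_self_mulVec P (Pi.single 0 1)
  rw [← hP, single_dotProduct_mulVec_single, hm, Fin.sum_univ_three] at h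
  exact ⟨_, _, _, h.symm⟩

lemma odd_of_sq_add_sq_add_sq_emod_four_eq_three {x y z : ℤ} (h : (x ^ 2 + y ^ 2 + z ^ 2) % 4 = 3) :
    Odd x ∧ Odd y ∧ Odd z := by
  have hsq {w : ℤ} (hw : ¬Odd w) : w ^ 2 % 4 = 0 := by
    obtain ⟨k, rfl⟩ := Int.not_odd_iff_even.mp hw
    rw [show (k + k) ^ 2 = 4 * k ^ 2 by ring]
    exact Int.mul_emod_right 4 (k ^ 2)
  have hle (w : ℤ) : w ^ 2 % 4 ≤ 1 := by
    by_cases hw : Odd w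
    · rw [Int.sq_mod_four_eq_one_of_odd hw]
    · rw [hsq hw]; norm_num
  have := hle x; have := hle y; have := hle z
  refine ⟨?_, ?_, ?_⟩ <;> by_contra hw <;> have := hsq hw <;> omega

lemma exists_sum_sq_eq_and_sum_eq_of_dvd {T x y z : ℤ} (hx : Odd x) (hy : Odd y) (hz : Odd z)
    (h4 : 4 ∣ T + x + y + z) :
    ∃ a b c d : ℤ, 4 * (a ^ 2 + b ^ 2 + c ^ 2 + d ^ 2) = T ^ 2 + x ^ 2 + y ^ 2 + z ^ 2 ∧
      a + b + c + d = T := by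
  obtain ⟨a, ha⟩ := h4
  obtain ⟨s, hs⟩ := hy.add_odd hz
  obtain ⟨t, ht⟩ := hx.add_odd hz
  obtain ⟨u, hu⟩ := hx.add_odd hy
  refine ⟨a, a - s, a - t, a - u, ?_, by linarith⟩
  obtain rfl : x = t + u - s := by linarith
  obtain rfl : y = s + u - t := by linarith
  obtain rfl : z = s + t - u := by linarith
  obtain rfl : T = 4 * a - (s + t + u) := by linarith
  ring

lemma exists_sum_sq_eq_and_sum_eq {T x y z : ℤ} (hT : Odd T) (hx : Odd x) (hy : Odd y)
    (hz : Odd z) :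
    ∃ a b c d : ℤ, 4 * (a ^ 2 + b ^ 2 + c ^ 2 + d ^ 2) = T ^ 2 + x ^ 2 + y ^ 2 + z ^ 2 ∧
      a + b + c + d = T := by
  have h4 : 4 ∣ T + x + y + z ∨ 4 ∣ T + -x + y + z := by
    rw [Int.odd_iff] at hT hx hy hz
    omega
  rcases h4 with h4 | h4
  · exact exists_sum_sq_eq_and_sum_eq_of_dvd hx hy hz h4
  · simpa using exists_sum_sq_eq_and_sum_eq_of_dvd hx.neg hy hz h4

lemma four_mul_sub_sq_emod_eight {n T : ℤ} (hT : Odd T) (hn : Odd n) :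
    (4 * n - T ^ 2) % 8 = 3 := by
  obtain ⟨k, rfl⟩ := hT
  obtain ⟨j, hj⟩ := Int.even_mul_succ_self k
  rw [Int.odd_iff] at hn
  have : 4 * n - (2 * k + 1) ^ 2 = 4 * n - 8 * j - 1 := by linear_combination -4 * hj
  omega

theorem odd_T_in_spectrum_general (n T : ℤ) (hT : Odd T)
    (hle : T^2 ≤ 4 * n) (hpar : Odd n) :
    ∃ a b c d : ℤ, a^2 + b^2 + c^2 + d^2 = n ∧ a + b + c + d = T := by
  lift 4 * n - T ^ 2 to ℕ using (by linarith) with m hm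
  have hm8 : m % 8 = 3 := by
    have := four_mul_sub_sq_emod_eight hT hpar
    omega
  obtain ⟨x, y, z, hxyz⟩ := exists_sq_add_sq_add_sq_eq_of_mod_eight_eq_three hm8
  obtain ⟨hx, hy, hz⟩ := odd_of_sq_add_sq_add_sq_emod_four_eq_three (by rw [hxyz]; omega)
  obtain ⟨a, b, c, d, hsq, hsum⟩ := exists_sum_sq_eq_and_sum_eq hT hx hy hz
  exact ⟨a, b, c, d, by linarith, hsum⟩

theorem odd_T_in_spectrum (n T : ℤ) (hT : Odd T) (hn : 0 < n)
    (hle : T^2 ≤ 4 * n) (hpar : Odd n) :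
    ∃ a b c d : ℤ, a^2 + b^2 + c^2 + d^2 = n ∧ a + b + c + d = T :=
  odd_T_in_spectrum_general n T hT hle hpar
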